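/- arXiv:2408.05015 — 4 statements merged into one kernel-verified Lean document; each statement's English description precedes it below -/
import Mathlib

section
/- Let X be a point of F_q^{n+1}, let i,j ∈ {1,…,n+1}, and let c be a maximal flag of type i with respect to X. Then the number of maximal flags of type j with respect to X that are opposite to c equals 0 if i+j < n+2, and equals (q−1+δ_{i+j,n+2})·q^{n(n−1)/2 + j − 2} if i+j ≥ n+2 (equality of rational numbers; δ denotes the Kronecker delta). -/
def MaxFlagA (F : Type) [Field F] (n : ℕ) : Type :=
  {U : Fin (n + 2) → Submodule F (Fin (n + 1) → F) //
    Monotone U ∧ ∀ k : Fin (n + 2), Module.finrank F (U k) = (k : ℕ)}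

noncomputable def flagMemA {F : Type} [Field F] {n : ℕ} (c : MaxFlagA F n) (k : ℕ) :
    Submodule F (Fin (n + 1) → F) :=
  if h : k < n + 2 then c.1 ⟨k, h⟩ else ⊤

noncomputable def flagTypeA {F : Type} [Field F] {n : ℕ} (c : MaxFlagA F n)
    (X : Submodule F (Fin (n + 1) → F)) : ℕ :=
  sInf {k : ℕ | X ≤ flagMemA c k}

/-- Two maximal flags are opposite when `U_i ∩ V_(n+1-i) = 0` for all `i`
(for `i = 0` and `i = n+1` this holds automatically). -/
def OppA {F : Type} [Field F] {n : ℕ} (c d : MaxFlagA F n) : Prop :=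
  ∀ i : Fin (n + 2), c.1 i ⊓ d.1 i.rev = ⊥

/-!
Choose a basis `e` adapted to `c` whose `(i-1)`-st vector spans `X`. The unitriangular matrices
(with respect to `e`) fix `c` and act simply transitively on the flags opposite to `c`: these are
exactly the flags `M⁻¹ W`, `M` unitriangular, where `W` is the flag of the reversed basis. Such a
flag has type `j` with respect to `X` iff column `i-1` of `M` has its first nonzero entry in row
`n+1-j`. Unitriangular matrices whose column `i-1` starts with `s ≤ i-1` zeros are parametrised by
their remaining `(n+1 choose 2) - s` free entries, and the count is a difference of two of these.
-/

open Module Submodule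

namespace Matrix

variable {ι R : Type*} [Fintype ι] [LinearOrder ι] [DecidableEq ι] [CommRing R]

def IsUnitriangular (M : Matrix ι ι R) : Prop :=
  M.IsUpperTriangular ∧ ∀ i, M i i = 1

theorem IsUnitriangular.det_eq_one {M : Matrix ι ι R} (hM : M.IsUnitriangular) : M.det = 1 := by
  simp [det_of_isUpperTriangular hM.1, hM.2]

theorem IsUnitriangular.isUnit_det {M : Matrix ι ι R} (hM : M.IsUnitriangular) :
    IsUnit M.det := by
  rw [hM.det_eq_one]; exact isUnit_one

theorem IsUnitriangular.inv {M : Matrix ι ι R} (hM : M.IsUnitriangular) :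
    M⁻¹.IsUnitriangular := by
  have := M.invertibleOfIsUnitDet hM.isUnit_det
  have hinv : M⁻¹.IsUpperTriangular := blockTriangular_inv_of_blockTriangular hM.1
  refine ⟨hinv, fun i => ?_⟩
  have hdiag : (M * M⁻¹) i i = M i i * M⁻¹ i i := by
    rw [mul_apply, Finset.sum_eq_single i]
    · intro r _ hri
      rcases lt_or_gt_of_ne hri with hr | hr
      · rw [hM.1 hr, zero_mul]
      · rw [hinv hr, mul_zero]
    · simp
  rwa [mul_nonsing_inv _ hM.isUnit_det, one_apply_eq, hM.2, one_mul, eq_comm] at hdiag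

end Matrix

namespace Module.Basis

variable {K V : Type*} [Field K] [AddCommGroup V] [Module K V] {n : ℕ}

theorem mem_flag_iff (b : Basis (Fin n) K V) {k : Fin (n + 1)} {v : V} :
    v ∈ b.flag k ↔ ∀ i : Fin n, k ≤ i.castSucc → b.repr v i = 0 := by
  rw [flag, b.mem_span_image]
  refine ⟨fun h i hi => ?_, fun h i hi => ?_⟩
  · by_contra hv
    exact (h (Finsupp.mem_support_iff.mpr hv)).not_ge hi
  · by_contra hik
    exact Finsupp.mem_support_iff.mp hi (h i (not_lt.mp hik))

theorem finrank_flag (b : Basis (Fin n) K V) (k : Fin (n + 1)) :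
    finrank K (b.flag k) = k := by
  classical
  have hli := b.linearIndependent.comp _ (Subtype.val_injective (p := fun i => i.castSucc < k))
  rw [flag, Set.image_eq_range]
  refine (finrank_span_eq_card hli).trans ?_
  rw [Fintype.card_subtype]
  have : ∀ i : Fin n, i.castSucc < k ↔ (i : ℕ) < k := fun i => Fin.lt_def
  simp only [this, Fin.card_filter_val_lt]
  omega

theorem flag_inf_reindex_revPerm_flag_rev (b : Basis (Fin n) K V) (k : Fin (n + 1)) :
    b.flag k ⊓ (b.reindex Fin.revPerm).flag k.rev = ⊥ := by
  refine (Submodule.eq_bot_iff _).mpr fun v hv => b.repr.injective ?_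
  rw [mem_inf, mem_flag_iff, mem_flag_iff] at hv
  ext i
  rw [map_zero, Finsupp.coe_zero, Pi.zero_apply]
  rcases le_or_gt k i.castSucc with hik | hik
  · exact hv.1 i hik
  · simpa using hv.2 i.rev
      (by rwa [← Fin.rev_succ, Fin.rev_le_rev, ← Fin.castSucc_lt_iff_succ_le])

theorem toLin_self_mem_flag_iff (b : Basis (Fin n) K V) (M : Matrix (Fin n) (Fin n) K)
    (i : Fin n) (k : Fin (n + 1)) :
    Matrix.toLin b b M (b i) ∈ b.flag k ↔ ∀ r : Fin n, k ≤ r.castSucc → M r i = 0 := by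
  rw [mem_flag_iff]
  simp only [← LinearMap.toMatrix_apply, LinearMap.toMatrix_toLin]

theorem map_toLin_flag_le (b : Basis (Fin n) K V) {M : Matrix (Fin n) (Fin n) K}
    (hM : M.IsUpperTriangular) (k : Fin (n + 1)) :
    (b.flag k).map (Matrix.toLin b b M) ≤ b.flag k := by
  rw [map_le_iff_le_comap, flag_le_iff]
  intro i hi
  refine b.flag_mono (Fin.castSucc_lt_iff_succ_le.mp hi) ?_
  rw [toLin_self_mem_flag_iff]
  intro r hr
  exact hM (Fin.castSucc_lt_castSucc_iff.mp (Fin.castSucc_lt_iff_succ_le.mpr hr))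

theorem comap_toLinearEquiv_flag (b : Basis (Fin n) K V) {M : Matrix (Fin n) (Fin n) K}
    (hM : M.IsUnitriangular) (k : Fin (n + 1)) :
    (b.flag k).comap (Matrix.toLinearEquiv b M hM.isUnit_det : V →ₗ[K] V) = b.flag k := by
  have := M.invertibleOfIsUnitDet hM.isUnit_det
  refine le_antisymm ?_ (map_le_iff_le_comap.mp (b.map_toLin_flag_le hM.1 k))
  rw [comap_equiv_eq_map_symm]
  exact b.map_toLin_flag_le (Matrix.blockTriangular_inv_of_blockTriangular hM.1) k

theorem toLin_self_sub_self_mem_flag (b : Basis (Fin n) K V) {M : Matrix (Fin n) (Fin n) K}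
    (hM : M.IsUnitriangular) (i : Fin n) :
    Matrix.toLin b b M (b i) - b i ∈ b.flag i.castSucc := by
  have : Matrix.toLin b b M (b i) - b i = Matrix.toLin b b (M - 1) (b i) := by
    simp [map_sub]
  rw [this, toLin_self_mem_flag_iff]
  intro r hr
  rcases (Fin.castSucc_le_castSucc_iff.mp hr).lt_or_eq with hir | rfl
  · simp [hM.1 hir, Matrix.one_apply_ne hir.ne']
  · simp [hM.2]

theorem toLin_self_toMatrix (b : Basis (Fin n) K V) (f : Fin n → V) (i : Fin n) :
    Matrix.toLin b b (b.toMatrix f) (b i) = f i := by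
  rw [Matrix.toLin_self]
  exact b.sum_repr (f i)

theorem toMatrix_isUnitriangular (b : Basis (Fin n) K V) {f : Fin n → V}
    (hf : ∀ i, b i - f i ∈ b.flag i.castSucc) : (b.toMatrix f).IsUnitriangular := by
  have hone : ∀ r i, i ≤ r → b.toMatrix f r i = (1 : Matrix (Fin n) (Fin n) K) r i := by
    intro r i hir
    have h0 := (b.mem_flag_iff.mp (hf i)) r (Fin.castSucc_le_castSucc_iff.mpr hir)
    rw [map_sub, Finsupp.sub_apply, sub_eq_zero, repr_self, Finsupp.single_apply] at h0
    simp only [toMatrix_apply, ← h0, Matrix.one_apply, eq_comm]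
  exact ⟨fun r i hir => (hone r i hir.le).trans (Matrix.one_apply_ne hir.ne'),
    fun i => (hone i i le_rfl).trans (Matrix.one_apply_eq i)⟩

end Module.Basis

section Counting

open Finset Matrix

def Matrix.HasLeadingZeros {R : Type*} [Zero R] {m : ℕ} (M : Matrix (Fin m) (Fin m) R) (i : Fin m)
    (s : ℕ) : Prop :=
  ∀ r : Fin m, (r : ℕ) < s → M r i = 0

theorem Nat.card_eqOn_compl {α β : Type*} [Finite β] (P : Finset α) (g : α → β) :
    Nat.card {f : α → β // ∀ a ∉ P, f a = g a} = Nat.card β ^ P.card := by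
  classical
  let e : {f : α → β // ∀ a ∉ P, f a = g a} ≃ (P → β) :=
    { toFun := fun f a => f.1 a
      invFun := fun h => ⟨fun a => if ha : a ∈ P then h ⟨a, ha⟩ else g a,
        fun a ha => dif_neg ha⟩
      left_inv := fun f => Subtype.ext <| funext fun a => by
        by_cases ha : a ∈ P
        · simp [ha]
        · simp [ha, f.2 a ha]
      right_inv := fun h => funext fun a => by simp }
  rw [Nat.card_congr e, Nat.card_fun, Nat.card_eq_fintype_card (α := P), Fintype.card_coe]

theorem Nat.card_subtype_and_not {α : Type*} [Finite α] {p q : α → Prop}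
    (h : ∀ a, q a → p a) :
    Nat.card {a // p a ∧ ¬ q a} = Nat.card {a // p a} - Nat.card {a // q a} :=
  Set.ncard_sdiff (s := {a | q a}) (t := {a | p a}) h

variable {R : Type*} [CommRing R] {m : ℕ}

theorem card_unitriangular_hasLeadingZeros_of_le [Finite R] (i : Fin m) {s : ℕ} (hs : s ≤ i) :
    Nat.card {M : Matrix (Fin m) (Fin m) R // M.IsUnitriangular ∧ M.HasLeadingZeros i s} =
      Nat.card R ^ (m.choose 2 - s) := by
  classical
  let upper : Finset (Fin m × Fin m) := {p | p.1 < p.2}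
  let top : Finset (Fin m × Fin m) := (univ.filter fun r : Fin m => (r : ℕ) < s) ×ˢ {i}
  have htop : top ⊆ upper := by
    intro p hp
    simp only [top, mem_product, mem_filter, mem_univ, true_and, mem_singleton] at hp
    simp only [upper, mem_filter, mem_univ, true_and, hp.2, Fin.lt_def]
    omega
  have hupper : upper.card = m.choose 2 := by
    simpa using Fintype.card_product_filter_lt (α := Fin m)
  have htop_card : top.card = s := by
    simp only [top, card_product, card_singleton, mul_one, Fin.card_filter_val_lt]
    omega
  have hfree : ∀ M : Matrix (Fin m) (Fin m) R,
      (M.IsUnitriangular ∧ M.HasLeadingZeros i s) ↔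
        ∀ p ∉ upper \ top, M p.1 p.2 = (1 : Matrix (Fin m) (Fin m) R) p.1 p.2 := by
    have hmem :
        ∀ r k : Fin m, (r, k) ∉ upper \ top ↔ (r < k → (r : ℕ) < s ∧ k = i) := by
      simp [upper, top, eq_comm]
    intro M
    simp only [Prod.forall, hmem]
    constructor
    · rintro ⟨hM, hcol⟩ r k hrk
      rcases lt_trichotomy r k with h | rfl | h
      · obtain ⟨hr, rfl⟩ := hrk h
        rw [hcol r hr, one_apply_ne h.ne]
      · rw [hM.2, one_apply_eq]
      · rw [hM.1 h, one_apply_ne h.ne']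
    · intro h
      refine ⟨⟨fun r k hkr => ?_, fun k => ?_⟩, fun r hr => ?_⟩
      · exact (h r k fun hrk => absurd hkr hrk.not_gt).trans (one_apply_ne hkr.ne')
      · rw [h k k fun hkk => absurd hkk (lt_irrefl k), one_apply_eq]
      · have hri : r < i := Fin.lt_def.mpr (by omega)
        rw [h r i fun _ => ⟨hr, rfl⟩, one_apply_ne hri.ne]
  rw [show m.choose 2 - s = (upper \ top).card by
      rw [card_sdiff_of_subset htop, hupper, htop_card],
    ← Nat.card_eqOn_compl _ fun p => (1 : Matrix (Fin m) (Fin m) R) p.1 p.2]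
  exact Nat.card_congr ((Equiv.curry _ _ _).symm.subtypeEquiv hfree)

theorem card_unitriangular_hasLeadingZeros_of_lt [Nontrivial R] (i : Fin m) {s : ℕ} (hs : i < s) :
    Nat.card {M : Matrix (Fin m) (Fin m) R // M.IsUnitriangular ∧ M.HasLeadingZeros i s} = 0 := by
  rw [Nat.card_eq_zero]
  left
  exact ⟨fun ⟨M, hM, hcol⟩ => one_ne_zero ((hM.2 i).symm.trans (hcol i hs))⟩

theorem card_unitriangular_pivot [Finite R] [Nontrivial R] (i : Fin m) (s : ℕ) :
    (Nat.card {M : Matrix (Fin m) (Fin m) R // M.IsUnitriangular ∧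
        M.HasLeadingZeros i s ∧ ¬ M.HasLeadingZeros i (s + 1)} : ℚ) =
      if (i : ℕ) < s then 0
      else if s = i then (Nat.card R : ℚ) ^ (m.choose 2 - s)
      else ((Nat.card R : ℚ) - 1) * (Nat.card R : ℚ) ^ (m.choose 2 - s - 1) := by
  rw [Nat.card_congr (Equiv.subtypeEquivRight fun M : Matrix (Fin m) (Fin m) R => show _ ↔
      (M.IsUnitriangular ∧ M.HasLeadingZeros i s) ∧
        ¬ (M.IsUnitriangular ∧ M.HasLeadingZeros i (s + 1)) by tauto),
    Nat.card_subtype_and_not fun M hM => ⟨hM.1, fun r hr => hM.2 r (by omega)⟩]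
  split_ifs with his hsi
  · rw [card_unitriangular_hasLeadingZeros_of_lt i his,
      card_unitriangular_hasLeadingZeros_of_lt i (by omega)]
    simp
  · rw [card_unitriangular_hasLeadingZeros_of_le i hsi.le,
      card_unitriangular_hasLeadingZeros_of_lt i (by omega)]
    simp
  · have hs : s + 1 ≤ m.choose 2 := by
      obtain ⟨l, rfl⟩ : ∃ l, m = l + 1 := ⟨m - 1, by omega⟩
      rw [Nat.choose_succ_succ, Nat.choose_one_right]
      omega
    have hq : 1 ≤ Nat.card R := Nat.card_pos
    rw [card_unitriangular_hasLeadingZeros_of_le i (by omega),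
      card_unitriangular_hasLeadingZeros_of_le i (by omega), Nat.sub_add_eq,
      Nat.cast_sub (Nat.pow_le_pow_right hq (by omega)),
      show m.choose 2 - s = m.choose 2 - s - 1 + 1 by omega]
    push_cast
    ring

end Counting

section Flags

variable {F : Type} [Field F] {n : ℕ}

theorem flagMemA_eq (d : MaxFlagA F n) {k : ℕ} (hk : k < n + 2) :
    flagMemA d k = d.1 ⟨k, hk⟩ := dif_pos hk

theorem flagMemA_mono (d : MaxFlagA F n) : Monotone (flagMemA d) := by
  intro a b hab
  unfold flagMemA
  split_ifs with ha hb hb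
  · exact d.2.1 (Fin.mk_le_mk.mpr hab)
  · exact le_top
  · omega
  · exact le_rfl

theorem flagTypeA_eq_succ_iff (d : MaxFlagA F n) (X : Submodule F (Fin (n + 1) → F)) (k : ℕ) :
    flagTypeA d X = k + 1 ↔ X ≤ flagMemA d (k + 1) ∧ ¬ X ≤ flagMemA d k :=
  Nat.sInf_upward_closed_eq_succ_iff (fun _ _ hab (h : X ≤ _) => h.trans (flagMemA_mono d hab)) k

def Module.Basis.toMaxFlagA (b : Basis (Fin (n + 1)) F (Fin (n + 1) → F)) : MaxFlagA F n :=
  ⟨b.flag, b.flag_mono, b.finrank_flag⟩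

namespace MaxFlagA

def comap (d : MaxFlagA F n) (g : (Fin (n + 1) → F) ≃ₗ[F] (Fin (n + 1) → F)) :
    MaxFlagA F n :=
  ⟨fun k => (d.1 k).comap (g : (Fin (n + 1) → F) →ₗ[F] (Fin (n + 1) → F)),
    fun _ _ h => comap_mono (d.2.1 h),
    fun k => by
      show finrank F ((d.1 k).comap (g : (Fin (n + 1) → F) →ₗ[F] (Fin (n + 1) → F))) = k
      rw [comap_equiv_eq_map_symm, LinearEquiv.finrank_map_eq, d.2.2]⟩

theorem oppA_comap {c d : MaxFlagA F n} (h : OppA c d)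
    (g : (Fin (n + 1) → F) ≃ₗ[F] (Fin (n + 1) → F)) :
    OppA (c.comap g) (d.comap g) := fun k => by
  simp only [comap, ← comap_inf, h k, comap_bot, LinearEquiv.ker]

theorem castSucc_lt_succ (c : MaxFlagA F n) (i : Fin (n + 1)) : c.1 i.castSucc < c.1 i.succ := by
  refine (c.2.1 (Fin.castSucc_le_succ i)).lt_of_ne fun h => ?_
  have := c.2.2 i.succ
  rw [← h, c.2.2 i.castSucc] at this
  simp at this

theorem last_eq_top (c : MaxFlagA F n) : c.1 (Fin.last (n + 1)) = ⊤ :=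
  eq_top_of_finrank_eq (by rw [c.2.2]; simp)

theorem succ_eq_span_singleton_sup (c : MaxFlagA F n) {i : Fin (n + 1)} {v : Fin (n + 1) → F}
    (hv : v ∈ c.1 i.succ) (hv' : v ∉ c.1 i.castSucc) :
    c.1 i.succ = span F {v} ⊔ c.1 i.castSucc := by
  refine (eq_of_le_of_finrank_le (sup_le ((span_singleton_le_iff_mem _ _).mpr hv)
    (c.2.1 (Fin.castSucc_le_succ i))) ?_).symm
  have hlt : c.1 i.castSucc < span F {v} ⊔ c.1 i.castSucc :=
    lt_of_le_of_ne le_sup_right fun h => hv' (h ▸ mem_sup_left (mem_span_singleton_self v))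
  have := finrank_lt_finrank_of_lt hlt
  rw [c.2.2, Fin.val_succ]
  rw [c.2.2, Fin.val_castSucc] at this
  omega

theorem span_image_eq (c : MaxFlagA F n) {v : Fin (n + 1) → Fin (n + 1) → F}
    (hv : ∀ i, v i ∈ c.1 i.succ ∧ v i ∉ c.1 i.castSucc) (m : Fin (n + 2)) :
    span F (v '' {i | i.castSucc < m}) = c.1 m := by
  induction m using Fin.induction with
  | zero =>
    simp only [Fin.not_lt_zero, Set.ofPred_false, Set.image_empty, span_empty]
    exact (finrank_eq_zero.mp (c.2.2 0)).symm
  | succ i ih =>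
    have hset :
        {j : Fin (n + 1) | j.castSucc < i.succ} = insert i {j | j.castSucc < i.castSucc} := by
      ext j
      simp [Fin.castSucc_lt_succ_iff, le_iff_eq_or_lt]
    rw [hset, Set.image_insert_eq, span_insert, ih,
      ← c.succ_eq_span_singleton_sup (hv i).1 (hv i).2]

theorem exists_basis_toMaxFlagA_eq (c : MaxFlagA F n) {k : Fin (n + 1)}
    {x : Fin (n + 1) → F} (hx : x ∈ c.1 k.succ) (hx' : x ∉ c.1 k.castSucc) :
    ∃ e : Basis (Fin (n + 1)) F (Fin (n + 1) → F), e.toMaxFlagA = c ∧ e k = x := by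
  classical
  choose v hv using fun i => SetLike.exists_of_lt (c.castSucc_lt_succ i)
  set w := Function.update v k x
  have hw : ∀ i, w i ∈ c.1 i.succ ∧ w i ∉ c.1 i.castSucc := by
    intro i
    rcases eq_or_ne i k with rfl | h
    · simp [w, hx, hx']
    · simpa [w, h] using hv i
  have htop : ⊤ ≤ span F (Set.range w) := by
    rw [← Set.image_univ, ← c.last_eq_top, ← c.span_image_eq hw]
    simp [Fin.castSucc_lt_last]
  refine ⟨basisOfTopLeSpanOfCardEqFinrank w htop (by simp), Subtype.ext (funext fun m => ?_),
    by simp [w]⟩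
  simp only [Module.Basis.toMaxFlagA, Module.Basis.flag, coe_basisOfTopLeSpanOfCardEqFinrank]
  exact c.span_image_eq hw m

end MaxFlagA

theorem OppA.sup_eq_top {c d : MaxFlagA F n} (h : OppA c d) (m : Fin (n + 2)) :
    c.1 m ⊔ d.1 m.rev = ⊤ := by
  refine eq_top_of_finrank_eq ?_
  have := finrank_sup_add_finrank_inf_eq (c.1 m) (d.1 m.rev)
  rw [h m, finrank_bot, c.2.2, d.2.2, Fin.val_rev] at this
  simp only [finrank_fin_fun]
  omega

namespace Module.Basis

variable (e : Basis (Fin (n + 1)) F (Fin (n + 1) → F))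

theorem oppA_toMaxFlagA_reindex_revPerm : OppA e.toMaxFlagA (e.reindex Fin.revPerm).toMaxFlagA :=
  e.flag_inf_reindex_revPerm_flag_rev

theorem toMaxFlagA_comap {M : Matrix (Fin (n + 1)) (Fin (n + 1)) F} (hM : M.IsUnitriangular) :
    e.toMaxFlagA.comap (Matrix.toLinearEquiv e M hM.isUnit_det) = e.toMaxFlagA :=
  Subtype.ext (funext (e.comap_toLinearEquiv_flag hM))

noncomputable def oppositeFlag (M : Matrix (Fin (n + 1)) (Fin (n + 1)) F)
    (hM : M.IsUnitriangular) : MaxFlagA F n :=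
  (e.reindex Fin.revPerm).toMaxFlagA.comap (Matrix.toLinearEquiv e M hM.isUnit_det)

theorem oppA_oppositeFlag {M : Matrix (Fin (n + 1)) (Fin (n + 1)) F} (hM : M.IsUnitriangular) :
    OppA e.toMaxFlagA (e.oppositeFlag M hM) := by
  have := MaxFlagA.oppA_comap e.oppA_toMaxFlagA_reindex_revPerm
    (Matrix.toLinearEquiv e M hM.isUnit_det)
  rwa [e.toMaxFlagA_comap hM] at this

theorem toLinearEquiv_symm_self_mem_oppositeFlag {M : Matrix (Fin (n + 1)) (Fin (n + 1)) F}
    (hM : M.IsUnitriangular) (k : Fin (n + 1)) :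
    (Matrix.toLinearEquiv e M hM.isUnit_det).symm (e k) ∈
      (e.oppositeFlag M hM).1 k.castSucc.rev := by
  set g := Matrix.toLinearEquiv e M hM.isUnit_det
  show g (g.symm (e k)) ∈ (e.reindex Fin.revPerm).flag k.castSucc.rev
  rw [LinearEquiv.apply_symm_apply, Fin.rev_castSucc]
  simpa using (e.reindex Fin.revPerm).self_mem_flag (Fin.castSucc_lt_succ (i := k.rev))

theorem toLinearEquiv_symm_self_sub_self_mem_flag {M : Matrix (Fin (n + 1)) (Fin (n + 1)) F}
    (hM : M.IsUnitriangular) (k : Fin (n + 1)) :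
    (Matrix.toLinearEquiv e M hM.isUnit_det).symm (e k) - e k ∈ e.flag k.castSucc := by
  rw [← e.comap_toLinearEquiv_flag hM, mem_comap, LinearEquiv.coe_coe, map_sub,
    LinearEquiv.apply_symm_apply, ← neg_sub]
  exact neg_mem (e.toLin_self_sub_self_mem_flag hM k)

/-- By opposition to `e.flag`, `M⁻¹ e_k` is the only vector of `(e.oppositeFlag M hM)_{n+1-k}`
congruent to `e_k` modulo `e.flag k`. -/
theorem oppositeFlag_injective {M M' : Matrix (Fin (n + 1)) (Fin (n + 1)) F}
    (hM : M.IsUnitriangular) (hM' : M'.IsUnitriangular)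
    (h : e.oppositeFlag M hM = e.oppositeFlag M' hM') : M = M' := by
  set g := Matrix.toLinearEquiv e M hM.isUnit_det
  set g' := Matrix.toLinearEquiv e M' hM'.isUnit_det
  have hsymm : g.symm = g'.symm := by
    refine e.ext' fun k => sub_eq_zero.mp ?_
    have hflag : g.symm (e k) - g'.symm (e k) ∈ e.flag k.castSucc := by
      simpa using sub_mem (e.toLinearEquiv_symm_self_sub_self_mem_flag hM k)
        (e.toLinearEquiv_symm_self_sub_self_mem_flag hM' k)
    have hd : g.symm (e k) - g'.symm (e k) ∈ (e.oppositeFlag M hM).1 k.castSucc.rev :=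
      sub_mem (e.toLinearEquiv_symm_self_mem_oppositeFlag hM k)
        (h ▸ e.toLinearEquiv_symm_self_mem_oppositeFlag hM' k)
    exact (Submodule.eq_bot_iff _).mp (e.oppA_oppositeFlag hM k.castSucc) _ ⟨hflag, hd⟩
  have hg : g = g' := by simpa using congrArg LinearEquiv.symm hsymm
  exact (Matrix.toLin e e).injective (congrArg LinearEquiv.toLinearMap hg)

/-- The coordinate matrix `A` of vectors `f k ∈ d_{n+1-k}` congruent to `e_k` modulo `e.flag k`
is unitriangular and maps the reversed flag of `e` onto `d`, so `d` is the opposite flag of `A⁻¹`.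
-/
theorem exists_oppositeFlag_eq {d : MaxFlagA F n} (hd : OppA e.toMaxFlagA d) :
    ∃ (M : Matrix (Fin (n + 1)) (Fin (n + 1)) F) (hM : M.IsUnitriangular),
      e.oppositeFlag M hM = d := by
  have hsplit :
      ∀ k : Fin (n + 1), ∃ f ∈ d.1 k.castSucc.rev, e k - f ∈ e.flag k.castSucc := by
    intro k
    obtain ⟨u, hu, f, hf, huf⟩ :=
      mem_sup.mp ((hd.sup_eq_top k.castSucc).symm ▸ mem_top : e k ∈ e.flag k.castSucc ⊔ _)
    exact ⟨f, hf, by rwa [← huf, add_sub_cancel_right]⟩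
  choose f hf hf' using hsplit
  set A := e.toMatrix f
  have hA : A.IsUnitriangular := e.toMatrix_isUnitriangular hf'
  refine ⟨A⁻¹, hA.inv, Subtype.ext (funext fun m => ?_)⟩
  set g := Matrix.toLinearEquiv e A hA.isUnit_det
  have hmap :
      ((e.reindex Fin.revPerm).flag m).map (g : (Fin (n + 1) → F) →ₗ[F] _) = d.1 m := by
    refine eq_of_le_of_finrank_eq ?_ (by rw [LinearEquiv.finrank_map_eq, finrank_flag, d.2.2])
    rw [map_le_iff_le_comap, flag_le_iff]
    intro i hi
    have := hf i.rev
    rw [Fin.rev_castSucc, Fin.rev_rev] at this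
    simpa [g, A, toLin_self_toMatrix] using d.2.1 (Fin.castSucc_lt_iff_succ_le.mp hi) this
  rw [← hmap]
  show ((e.reindex Fin.revPerm).flag m).comap
    (Matrix.toLinearEquiv e A⁻¹ hA.inv.isUnit_det : (Fin (n + 1) → F) →ₗ[F] _) = _
  rw [comap_equiv_eq_map_symm]
  congr 1
  show Matrix.toLin e e A⁻¹⁻¹ = Matrix.toLin e e A
  rw [Matrix.nonsing_inv_nonsing_inv _ hA.isUnit_det]

theorem span_singleton_le_oppositeFlag_iff {M : Matrix (Fin (n + 1)) (Fin (n + 1)) F}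
    (hM : M.IsUnitriangular) (i : Fin (n + 1)) (m : Fin (n + 2)) :
    span F {e i} ≤ (e.oppositeFlag M hM).1 m ↔
      ∀ r : Fin (n + 1), (r : ℕ) + m ≤ n → M r i = 0 := by
  rw [span_singleton_le_iff_mem]
  show Matrix.toLin e e M (e i) ∈ (e.reindex Fin.revPerm).flag m ↔ _
  have hrepr : ∀ r, (e.reindex Fin.revPerm).repr (Matrix.toLin e e M (e i)) r = M r.rev i := by
    intro r
    rw [repr_reindex_apply, ← LinearMap.toMatrix_apply, LinearMap.toMatrix_toLin]
    rfl
  simp only [mem_flag_iff, hrepr, Fin.le_def, Fin.val_castSucc]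
  refine ⟨fun h r hr => ?_, fun h r hr => h r.rev (by rw [Fin.val_rev]; omega)⟩
  simpa using h r.rev (by rw [Fin.val_rev]; omega)

theorem flagTypeA_oppositeFlag_eq_succ_iff {M : Matrix (Fin (n + 1)) (Fin (n + 1)) F}
    (hM : M.IsUnitriangular) (i : Fin (n + 1)) {k : ℕ} (hk : k ≤ n) :
    flagTypeA (e.oppositeFlag M hM) (span F {e i}) = k + 1 ↔
      (M.HasLeadingZeros i (n - k)) ∧
        ¬ M.HasLeadingZeros i (n - k + 1) := by
  rw [flagTypeA_eq_succ_iff, flagMemA_eq _ (by omega), flagMemA_eq _ (by omega),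
    e.span_singleton_le_oppositeFlag_iff, e.span_singleton_le_oppositeFlag_iff]
  have hcongr : ∀ a b : ℕ, a + b = n + 1 →
      ((∀ r : Fin (n + 1), (r : ℕ) + b ≤ n → M r i = 0) ↔
        M.HasLeadingZeros i a) :=
    fun a b hab => forall_congr' fun r => imp_congr_left (by omega)
  rw [hcongr (n - k) (k + 1) (by omega), hcongr (n - k + 1) k (by omega)]

theorem card_flagTypeA_oppA (i : Fin (n + 1)) {k : ℕ} (hk : k ≤ n) :
    Nat.card {d : MaxFlagA F n // flagTypeA d (span F {e i}) = k + 1 ∧ OppA e.toMaxFlagA d} =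
      Nat.card {M : Matrix (Fin (n + 1)) (Fin (n + 1)) F // M.IsUnitriangular ∧
        (M.HasLeadingZeros i (n - k)) ∧
          ¬ M.HasLeadingZeros i (n - k + 1)} := by
  symm
  refine Nat.card_congr (Equiv.ofBijective (fun M => ⟨e.oppositeFlag M.1 M.2.1,
    (e.flagTypeA_oppositeFlag_eq_succ_iff M.2.1 i hk).mpr M.2.2, e.oppA_oppositeFlag M.2.1⟩)
    ⟨fun M M' h => Subtype.ext (e.oppositeFlag_injective M.2.1 M'.2.1 (congrArg Subtype.val h)),
      fun ⟨d, hdk, hd⟩ => ?_⟩)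
  obtain ⟨M, hM, rfl⟩ := e.exists_oppositeFlag_eq hd
  exact ⟨⟨M, hM, (e.flagTypeA_oppositeFlag_eq_succ_iff hM i hk).mp hdk⟩, rfl⟩

end Module.Basis

end Flags

/-- The number of maximal flags of type `j` w.r.t. `X` opposite to a given flag of type `i`
w.r.t. `X` is `0` if `i+j < n+2` and `(q-1+δ_{i+j,n+2})·q^(n(n-1)/2+j-2)` otherwise. -/
theorem card_opposite_type_j_flags (F : Type) [Field F] [Fintype F] (q : ℕ)
    (hq : Fintype.card F = q) (n : ℕ) (X : Submodule F (Fin (n + 1) → F))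
    (hX : Module.finrank F X = 1) (i j : ℕ) (hi1 : 1 ≤ i) (hi2 : i ≤ n + 1)
    (hj1 : 1 ≤ j) (hj2 : j ≤ n + 1) (c : MaxFlagA F n) (hc : flagTypeA c X = i) :
    (Nat.card {d : MaxFlagA F n // flagTypeA d X = j ∧ OppA c d} : ℚ) =
      if i + j < n + 2 then 0
      else ((q : ℚ) - 1 + (if i + j = n + 2 then 1 else 0)) *
        (q : ℚ) ^ (((n * (n - 1) / 2 : ℕ) : ℤ) + (j : ℤ) - 2) := by
  obtain ⟨i, rfl⟩ : ∃ i', i = i' + 1 := ⟨i - 1, by omega⟩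
  obtain ⟨k, rfl⟩ : ∃ k, j = k + 1 := ⟨j - 1, by omega⟩
  obtain ⟨hXc, hXc'⟩ := (flagTypeA_eq_succ_iff c X i).mp hc
  obtain ⟨x, hxX, hx⟩ := SetLike.not_le_iff_exists.mp hXc'
  have hX_eq : X = span F {x} :=
    eq_span_singleton_of_mem_of_finrank_eq_one hX hxX fun h => hx (h ▸ zero_mem _)
  rw [flagMemA_eq c (by omega)] at hXc hx
  obtain ⟨e, rfl, rfl⟩ :=
    c.exists_basis_toMaxFlagA_eq (k := ⟨i, by omega⟩) (hXc hxX) hx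
  subst hq
  rw [hX_eq, e.card_flagTypeA_oppA ⟨i, by omega⟩ (by omega), card_unitriangular_pivot,
    Nat.card_eq_fintype_card]
  have hq0 : (Fintype.card F : ℚ) ≠ 0 := by positivity
  have hC : (n + 1).choose 2 - (n - k) = n * (n - 1) / 2 + k := by
    rw [Nat.choose_succ_succ, Nat.choose_one_right, Nat.choose_two_right]
    omega
  dsimp only
  rcases lt_trichotomy i (n - k) with h | h | h
  · rw [if_pos h, if_pos (by omega)]
  · rw [if_neg (by omega), if_pos h.symm, if_neg (by omega), if_pos (by omega), hC,
      sub_add_cancel, ← zpow_natCast, ← zpow_one_add₀ hq0]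
    congr 1
    push_cast
    omega
  · rw [if_neg (by omega), if_neg (by omega), if_neg (by omega), if_neg (by omega), hC,
      add_zero, ← zpow_natCast]
    congr 2
    push_cast
    omega
end

section
/- Let q > 0 be a real number, let n = 2m−1 with m ≥ 1, and let Q be the (n+1)×(n+1) real matrix with entries Q_{ij} = 0 if i+j < n+2 and Q_{ij} = (q−1+δ_{i+j,n+2})·q^{n(n−1)/2 + j − 2} if i+j ≥ n+2 (real powers of q; δ the Kronecker delta; indices i,j ∈ {1,…,n+1}). For j ∈ {1,…,m} let v_j be the column vector (0,…,0, q^j,…,q^j, −1,…,−1, 0,…,0)ᵀ with m−j leading zeros, then j entries equal to q^j, then j entries equal to −1, then m−j trailing zeros. Then Q·v_j = −q^{(n²−1)/2}·v_j, i.e. v_j is an eigenvector of Q with eigenvalue −q^{(n²−1)/2}. -/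
open Real

/-- The quotient matrix `Q` of the opposition graph on maximal flags of `PG(n,q)` with
respect to a point stabilizer; rows/columns are indexed by `Fin (n+1)`, where the index
`a : Fin (n+1)` corresponds to the `1`-based index `i = a + 1 ∈ {1,…,n+1}`. Powers of
`q` are real powers. -/
noncomputable def QmatA (q : ℝ) (n : ℕ) : Matrix (Fin (n + 1)) (Fin (n + 1)) ℝ :=
  fun a b =>
    if (a : ℕ) + 1 + ((b : ℕ) + 1) < n + 2 then 0
    else (q - 1 + (if (a : ℕ) + 1 + ((b : ℕ) + 1) = n + 2 then 1 else 0)) *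
      q ^ (((n * (n - 1) / 2 : ℕ) : ℝ) + (((b : ℕ) + 1 : ℕ) : ℝ) - 2)

/-- The vector `v_j = (0,…,0,q^j,…,q^j,-1,…,-1,0,…,0)ᵀ` with `m-j` leading zeros, `j`
entries `q^j`, `j` entries `-1` and `m-j` trailing zeros. -/
noncomputable def vvecA (q : ℝ) (n m j : ℕ) : Fin (n + 1) → ℝ :=
  fun k =>
    if (k : ℕ) + 1 ≤ m - j then 0
    else if (k : ℕ) + 1 ≤ m then q ^ (j : ℕ)
    else if (k : ℕ) + 1 ≤ m + j then -1
    else 0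

/-- `vvecA` as a function on `ℕ`. -/
noncomputable def vN (q : ℝ) (m t : ℕ) : ℕ → ℝ := fun b =>
  if b + 1 ≤ m - t then 0
  else if b + 1 ≤ m then q ^ t
  else if b + 1 ≤ m + t then -1
  else 0

lemma vN_zero_lo {q : ℝ} {m t b : ℕ} (h : b + 1 ≤ m - t) : vN q m t b = 0 := by
  unfold vN; rw [if_pos h]

lemma vN_q {q : ℝ} {m t b : ℕ} (h1 : m - t < b + 1) (h2 : b + 1 ≤ m) :
    vN q m t b = q ^ t := by
  unfold vN; rw [if_neg (by omega), if_pos h2]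

lemma vN_neg {q : ℝ} {m t b : ℕ} (h1 : m < b + 1) (h2 : b + 1 ≤ m + t) :
    vN q m t b = -1 := by
  unfold vN; rw [if_neg (by omega), if_neg (by omega), if_pos h2]

lemma vN_zero_hi {q : ℝ} {m t b : ℕ} (h : m + t < b + 1) : vN q m t b = 0 := by
  unfold vN; rw [if_neg (by omega), if_neg (by omega), if_neg (by omega)]

lemma geomR (q : ℝ) (hq : 0 < q) (n : ℕ) :
    (q - 1) * ∑ b ∈ Finset.range n, q ^ (b : ℝ) = q ^ (n : ℝ) - 1 := by
  induction n with
  | zero => simp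
  | succ n ih =>
    rw [Finset.sum_range_succ, mul_add, ih]
    have h : q ^ ((n + 1 : ℕ) : ℝ) = q ^ (n : ℝ) * q := by
      push_cast
      rw [Real.rpow_add hq, Real.rpow_one]
    rw [h]; ring

lemma geomIco (q : ℝ) (hq : 0 < q) (a c : ℕ) (h : a ≤ c) :
    (q - 1) * ∑ b ∈ Finset.Ico a c, q ^ (b : ℝ) = q ^ (c : ℝ) - q ^ (a : ℝ) := by
  rw [Finset.sum_Ico_eq_sub _ h, mul_sub, geomR q hq, geomR q hq]; ring

lemma sumv (q : ℝ) (hq : 0 < q) (m t : ℕ) (ht1 : 1 ≤ t) (ht2 : t ≤ m) (L : ℕ) :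
    (q - 1) * ∑ b ∈ Finset.Ico L (2 * m), q ^ (b : ℝ) * vN q m t b =
      if L ≤ m - t then 0
      else if L ≤ m then q ^ (m : ℝ) - q ^ ((L + t : ℕ) : ℝ)
      else if L < m + t then q ^ (L : ℝ) - q ^ ((m + t : ℕ) : ℝ)
      else 0 := by
  have kqt : (q : ℝ) ^ t = q ^ ((t : ℕ) : ℝ) := (Real.rpow_natCast q t).symm
  have kadd : ∀ a b : ℕ, q ^ (a : ℝ) * q ^ (b : ℝ) = q ^ ((a + b : ℕ) : ℝ) := by
    intro a b
    rw [← Real.rpow_add hq]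
    congr 1
    push_cast; ring
  have hrestrict : ∑ b ∈ Finset.Ico L (2 * m), q ^ (b : ℝ) * vN q m t b
      = ∑ b ∈ Finset.Ico (max L (m - t)) (m + t), q ^ (b : ℝ) * vN q m t b := by
    symm
    apply Finset.sum_subset
    · intro b hb
      simp only [Finset.mem_Ico] at hb ⊢
      omega
    · intro b hb hnb
      simp only [Finset.mem_Ico] at hb hnb
      have hv : vN q m t b = 0 := by
        rcases (by omega : b + 1 ≤ m - t ∨ m + t < b + 1) with h | h
        · exact vN_zero_lo h
        · exact vN_zero_hi h
      rw [hv, mul_zero]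
  rw [hrestrict]
  by_cases hLm : L ≤ m
  · have ha : max L (m - t) ≤ m := by omega
    rw [← Finset.sum_Ico_consecutive _ ha (Nat.le_add_right m t)]
    have h1 : ∑ b ∈ Finset.Ico (max L (m - t)) m, q ^ (b : ℝ) * vN q m t b
        = (∑ b ∈ Finset.Ico (max L (m - t)) m, q ^ (b : ℝ)) * q ^ t := by
      rw [Finset.sum_mul]
      refine Finset.sum_congr rfl (fun b hb => ?_)
      simp only [Finset.mem_Ico] at hb
      rw [vN_q (by omega) (by omega)]
    have h2 : ∑ b ∈ Finset.Ico m (m + t), q ^ (b : ℝ) * vN q m t b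
        = (∑ b ∈ Finset.Ico m (m + t), q ^ (b : ℝ)) * (-1) := by
      rw [Finset.sum_mul]
      refine Finset.sum_congr rfl (fun b hb => ?_)
      simp only [Finset.mem_Ico] at hb
      rw [vN_neg (by omega) (by omega)]
    rw [h1, h2]
    have g1 := geomIco q hq (max L (m - t)) m ha
    have g2 := geomIco q hq m (m + t) (Nat.le_add_right m t)
    have key2 : q ^ (m : ℝ) * q ^ ((t : ℕ) : ℝ) = q ^ ((m + t : ℕ) : ℝ) := kadd m t
    by_cases hL1 : L ≤ m - t
    · have haa : max L (m - t) = m - t := by omega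
      rw [haa] at g1
      rw [haa]
      rw [if_pos hL1, kqt]
      have key : q ^ ((m - t : ℕ) : ℝ) * q ^ ((t : ℕ) : ℝ) = q ^ (m : ℝ) := by
        rw [kadd, Nat.sub_add_cancel ht2]
      linear_combination q ^ ((t : ℕ) : ℝ) * g1 - g2 + key2 - key
    · have haa : max L (m - t) = L := by omega
      rw [haa] at g1
      rw [haa]
      rw [if_neg hL1, if_pos hLm, kqt]
      have key3 : q ^ ((L : ℕ) : ℝ) * q ^ ((t : ℕ) : ℝ) = q ^ ((L + t : ℕ) : ℝ) := kadd L t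
      linear_combination q ^ ((t : ℕ) : ℝ) * g1 - g2 + key2 - key3
  · have haa : max L (m - t) = L := by omega
    rw [haa]
    by_cases hLt : L < m + t
    · have h2 : ∑ b ∈ Finset.Ico L (m + t), q ^ (b : ℝ) * vN q m t b
          = (∑ b ∈ Finset.Ico L (m + t), q ^ (b : ℝ)) * (-1) := by
        rw [Finset.sum_mul]
        refine Finset.sum_congr rfl (fun b hb => ?_)
        simp only [Finset.mem_Ico] at hb
        rw [vN_neg (by omega) (by omega)]
      rw [h2, if_neg (by omega), if_neg hLm, if_pos hLt]
      have g := geomIco q hq L (m + t) (le_of_lt hLt)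
      linear_combination -g
    · rw [Finset.Ico_eq_empty (by omega), if_neg (by omega), if_neg hLm, if_neg hLt]
      simp

/-- The generic term of the matrix-vector product, as a function of a natural index. -/
noncomputable def Fterm (q : ℝ) (m t K : ℕ) : ℕ → ℝ := fun b =>
  (if K + 1 + (b + 1) < 2 * m - 1 + 2 then 0
   else (q - 1 + (if K + 1 + (b + 1) = 2 * m - 1 + 2 then 1 else 0)) *
     q ^ ((((2 * m - 1) * ((2 * m - 1) - 1) / 2 : ℕ) : ℝ) + (((b + 1 : ℕ)) : ℝ) - 2)) *
  vN q m t b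

/-- `v_j` is an eigenvector of `Q` with eigenvalue `-q^((n²-1)/2)`. -/
theorem quotient_matrix_eigenvector (q : ℝ) (hq : 0 < q) (m : ℕ) (hm : 1 ≤ m) (n : ℕ)
    (hn : n = 2 * m - 1) (j : ℕ) (hj1 : 1 ≤ j) (hj2 : j ≤ m) :
    (QmatA q n).mulVec (vvecA q n m j) =
      (-(q ^ ((((n : ℝ)) ^ 2 - 1) / 2))) • vvecA q n m j := by
  subst hn
  funext k
  have hk : (k : ℕ) < 2 * m - 1 + 1 := k.isLt
  set K := (k : ℕ) with hKdef
  set L := 2 * m - 1 - K with hLdef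
  have hL2m : L < 2 * m := by omega
  simp only [Matrix.mulVec, dotProduct, Pi.smul_apply, smul_eq_mul]
  have hvv : vvecA q (2 * m - 1) m j k = vN q m j K := rfl
  set N' := (2 * m - 1) * ((2 * m - 1) - 1) / 2 with hN'
  have hN'' : N' = (2 * m - 1) * (m - 1) := by
    have h1 : (2 * m - 1) - 1 = 2 * (m - 1) := by omega
    rw [hN', h1, show (2 * m - 1) * (2 * (m - 1)) = 2 * ((2 * m - 1) * (m - 1)) by ring,
      Nat.mul_div_cancel_left _ (by norm_num)]
  set c := q ^ (((N' : ℕ) : ℝ) - 1) with hc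
  have hstep1 : (∑ x : Fin (2 * m - 1 + 1), QmatA q (2 * m - 1) k x * vvecA q (2 * m - 1) m j x)
      = ∑ b ∈ Finset.range (2 * m - 1 + 1), Fterm q m j K b := by
    rw [← Fin.sum_univ_eq_sum_range (Fterm q m j K) (2 * m - 1 + 1)]
    exact Finset.sum_congr rfl (fun x _ => rfl)
  have hstep2 : ∑ b ∈ Finset.range (2 * m - 1 + 1), Fterm q m j K b
      = ∑ b ∈ Finset.Ico L (2 * m), Fterm q m j K b := by
    rw [show 2 * m - 1 + 1 = 2 * m by omega, Finset.range_eq_Ico]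
    symm
    apply Finset.sum_subset
    · intro b hb
      simp only [Finset.mem_Ico] at hb ⊢
      omega
    · intro b hb hnb
      simp only [Finset.mem_Ico] at hb hnb
      have hcond : K + 1 + (b + 1) < 2 * m - 1 + 2 := by omega
      unfold Fterm
      rw [if_pos hcond, zero_mul]
  have hexp : ∀ b : ℕ, q ^ (((N' : ℕ) : ℝ) + (((b + 1 : ℕ)) : ℝ) - 2) = c * q ^ (b : ℝ) := by
    intro b
    rw [hc, ← Real.rpow_add hq]
    congr 1
    push_cast; ring
  have hstep3 : ∑ b ∈ Finset.Ico L (2 * m), Fterm q m j K b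
      = c * ((q - 1) * ∑ b ∈ Finset.Ico L (2 * m), q ^ (b : ℝ) * vN q m j b)
        + c * q ^ (L : ℝ) * vN q m j L := by
    have hterm : ∀ b ∈ Finset.Ico L (2 * m), Fterm q m j K b
        = c * ((q - 1) * (q ^ (b : ℝ) * vN q m j b))
          + (if b = L then c * q ^ (L : ℝ) * vN q m j L else 0) := by
      intro b hb
      simp only [Finset.mem_Ico] at hb
      unfold Fterm
      rw [if_neg (by omega)]
      by_cases hbL : b = L
      · subst hbL
        rw [if_pos (by omega), if_pos rfl, ← hN', hexp L]
        ring
      · have hne : K + 1 + (b + 1) ≠ 2 * m - 1 + 2 := by omega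
        rw [if_neg hne, if_neg hbL, ← hN', hexp b]
        ring
    rw [Finset.sum_congr rfl hterm, Finset.sum_add_distrib, ← Finset.mul_sum, ← Finset.mul_sum,
      Finset.sum_ite_eq' (Finset.Ico L (2 * m)) L,
      if_pos (by simp only [Finset.mem_Ico]; omega)]
  rw [hstep1, hstep2, hstep3, sumv q hq m j hj1 hj2 L, hvv]
  have hE : q ^ ((((2 * m - 1 : ℕ) : ℝ) ^ 2 - 1) / 2) = c * q ^ (m : ℝ) := by
    rw [hc, ← Real.rpow_add hq]
    congr 1
    have h1 : ((2 * m - 1 : ℕ) : ℝ) = 2 * (m : ℝ) - 1 := by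
      rw [Nat.cast_sub (by omega)]; push_cast; ring
    have h2 : ((N' : ℕ) : ℝ) = (2 * (m : ℝ) - 1) * ((m : ℝ) - 1) := by
      rw [hN'', Nat.cast_mul, Nat.cast_sub (by omega), Nat.cast_sub hm]; push_cast; ring
    rw [h1, h2]; ring
  rw [hE]
  have kqt : (q : ℝ) ^ j = q ^ ((j : ℕ) : ℝ) := (Real.rpow_natCast q j).symm
  have kadd : ∀ a b : ℕ, q ^ (a : ℝ) * q ^ (b : ℝ) = q ^ ((a + b : ℕ) : ℝ) := by
    intro a b
    rw [← Real.rpow_add hq]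
    congr 1
    push_cast; ring
  by_cases hc1 : K + 1 ≤ m - j
  · rw [vN_zero_lo hc1, vN_zero_hi (by omega), if_neg (by omega), if_neg (by omega),
      if_neg (by omega)]
    ring
  · by_cases hc2 : K + 1 ≤ m
    · rw [vN_q (by omega) hc2, vN_neg (by omega) (by omega)]
      have hif : (if L ≤ m - j then (0 : ℝ)
          else if L ≤ m then q ^ (m : ℝ) - q ^ ((L + j : ℕ) : ℝ)
          else if L < m + j then q ^ (L : ℝ) - q ^ ((m + j : ℕ) : ℝ)
          else 0) = q ^ (L : ℝ) - q ^ ((m + j : ℕ) : ℝ) := by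
        by_cases hLm : L ≤ m
        · have hLm' : L = m := by omega
          rw [if_neg (by omega), if_pos hLm, hLm', show m + j = m + j from rfl]
        · rw [if_neg (by omega), if_neg hLm, if_pos (by omega)]
      rw [hif, kqt]
      linear_combination c * kadd m j
    · by_cases hc3 : K + 1 ≤ m + j
      · rw [vN_neg (by omega) hc3, vN_q (by omega) (by omega)]
        have hif : (if L ≤ m - j then (0 : ℝ)
            else if L ≤ m then q ^ (m : ℝ) - q ^ ((L + j : ℕ) : ℝ)
            else if L < m + j then q ^ (L : ℝ) - q ^ ((m + j : ℕ) : ℝ)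
            else 0) = q ^ (m : ℝ) - q ^ ((L + j : ℕ) : ℝ) := by
          by_cases hLmj : L ≤ m - j
          · rw [if_pos hLmj, show L + j = m by omega]
            exact (sub_self _).symm
          · rw [if_neg hLmj, if_pos (by omega)]
        rw [hif, kqt]
        linear_combination c * kadd L j
      · rw [vN_zero_lo (by omega), vN_zero_hi (by omega), if_pos (by omega)]
        ring
end

section
/- Let X and Y be points of F_q^{n+1} with n ≥ 2 and let i,j ∈ {1,…,n+1}. If X = Y then |C_i^X ∩ C_j^Y| = δ_{ij}·c(n−1)·q^{i−1}. If X ≠ Y then q·|C_i^X ∩ C_j^Y| = c(n−2)·q^{i−1}·(q^{j−1}−δ_{ij}) (equality of rational numbers; δ denotes the Kronecker delta). -/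
/-- `c(k) = ∏_{i=1}^{k} (q^(i+1)-1)/(q-1)`, the number of maximal flags of `F_q^(k+1)`. -/
noncomputable def cA (q : ℚ) (k : ℕ) : ℚ :=
  ∏ i ∈ Finset.Icc 1 k, (q ^ (i + 1) - 1) / (q - 1)

/-!
The group `GL(V)` acts on complete flags and on points of `ℙ(V)`, preserving the type of a point
with respect to a flag, and it is transitive on points and on ordered pairs of distinct points.
Hence `|C_i^X ∩ C_j^Y|` only depends on whether `X = Y`, and it can be computed by double counting
incidences between flags and points (resp. pairs of distinct points). In a fixed flag the points
of type `k` are those of `U_k` outside `U_{k-1}`, so there are `q^(k-1)` of them; thus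
`v(n) · |C_i^X| = c(n) · q^(i-1)` and
`v(n) (v(n) - 1) · |C_i^X ∩ C_j^Y| = c(n) q^(i-1) (q^(j-1) - δ_ij)`.
The number `c(n)` of flags is obtained by the same double counting, applied to the first member
`U_1` of a flag: the flags with `U_1 = Z` are the flags of `V ⧸ Z`.
-/

open Module Submodule Finset
open scoped LinearAlgebra.Projectivization

theorem Nat.card_mul_eq_card_mul_of_fibers {α β : Type*} [Finite α] [Finite β]
    (r : α → β → Prop) {m n : ℕ} (hm : ∀ a, Nat.card {b // r a b} = m)
    (hn : ∀ b, Nat.card {a // r a b} = n) : Nat.card α * m = Nat.card β * n := by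
  classical
  have := Fintype.ofFinite α
  have := Fintype.ofFinite β
  have h := card_mul_eq_card_mul r (s := univ) (t := univ) (m := m) (n := n)
    (fun a _ => by
      simpa [bipartiteAbove, Nat.card_eq_fintype_card, Fintype.card_subtype] using hm a)
    (fun b _ => by
      simpa [bipartiteBelow, Nat.card_eq_fintype_card, Fintype.card_subtype] using hn b)
  simpa [Nat.card_eq_fintype_card] using h

theorem MulAction.card_mul_card_fiber_of_isPretransitive {G α β : Type*} [Group G]
    [MulAction G α] [MulAction G β] [IsPretransitive G α] [Finite α] [Finite β]
    (r : α → β → Prop) (hr : ∀ (g : G) a b, r (g • a) (g • b) ↔ r a b) {n : ℕ}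
    (hn : ∀ b, Nat.card {a // r a b} = n) (a : α) :
    Nat.card α * Nat.card {b // r a b} = Nat.card β * n := by
  refine Nat.card_mul_eq_card_mul_of_fibers r (fun a' => ?_) hn
  obtain ⟨g, rfl⟩ := exists_smul_eq G a a'
  exact Nat.card_congr ((toPerm g).subtypeEquiv fun b => (hr g a b).symm).symm

theorem Function.Embedding.card_fin_two_mem {α : Type*} [Finite α] (s t : Set α) :
    Nat.card {f : Fin 2 ↪ α // f 0 ∈ s ∧ f 1 ∈ t} = s.ncard * t.ncard - (s ∩ t).ncard := by
  have hdiag : s ×ˢ t ∩ Set.diagonal α = (fun a => (a, a)) '' (s ∩ t) := by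
    ext ⟨a, b⟩
    simp only [Set.mem_inter_iff, Set.mem_prod, Set.mem_diagonal_iff, Set.mem_image,
      Prod.mk.injEq]
    constructor
    · rintro ⟨⟨ha, hb⟩, rfl⟩
      exact ⟨a, ⟨ha, hb⟩, rfl, rfl⟩
    · rintro ⟨c, ⟨hs, ht⟩, rfl, rfl⟩
      exact ⟨⟨hs, ht⟩, rfl⟩
  have e : {f : Fin 2 ↪ α // f 0 ∈ s ∧ f 1 ∈ t} ≃ ↥(s ×ˢ t \ Set.diagonal α) :=
    (twoEmbeddingEquiv.subtypeEquiv (p := fun f => f 0 ∈ s ∧ f 1 ∈ t)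
      (q := fun x => x.1 ∈ s ×ˢ t) fun _ => Iff.rfl).trans
    ((Equiv.subtypeSubtypeEquivSubtypeInter _ _).trans
      (Equiv.setCongr (by ext; exact and_comm)))
  rw [Nat.card_congr e, Nat.card_coe_set_eq, ← Set.ncard_prod,
    ← Set.ncard_inter_add_ncard_sdiff_eq_ncard (s ×ˢ t) (Set.diagonal α), hdiag,
    Set.ncard_image_of_injective _ fun a b h => congrArg Prod.fst h]
  omega

theorem Function.Embedding.card_fin_two {α : Type*} [Finite α] :
    Nat.card (Fin 2 ↪ α) = Nat.card α * (Nat.card α - 1) := by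
  have h := card_fin_two_mem (Set.univ : Set α) Set.univ
  rw [Set.inter_self, Set.ncard_univ, ← Nat.mul_sub_one] at h
  rw [← h]
  exact (Nat.card_congr (Equiv.subtypeUnivEquiv fun _ => ⟨Set.mem_univ _, Set.mem_univ _⟩)).symm

theorem Fin.monotone_cons {α : Type*} [Preorder α] {n : ℕ} {x : α} {f : Fin n → α}
    (hf : Monotone f) (hx : ∀ k, x ≤ f k) : Monotone (Fin.cons x f : Fin (n + 1) → α) := by
  intro a b hab
  induction a using Fin.cases with
  | zero => induction b using Fin.cases with
    | zero => exact le_rfl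
    | succ b => exact hx b
  | succ a => induction b using Fin.cases with
    | zero => exact absurd hab (Fin.succ_pos a).not_ge
    | succ b => exact hf (Fin.succ_le_succ_iff.mp hab)

theorem Submodule.finrank_comap_mkQ {F V : Type*} [Field F] [AddCommGroup V] [Module F V]
    [FiniteDimensional F V] {Z : Submodule F V} (W : Submodule F (V ⧸ Z)) :
    finrank F (W.comap Z.mkQ) = finrank F W + finrank F Z := by
  have hZ : Z ≤ W.comap Z.mkQ := (ker_mkQ Z).ge.trans (LinearMap.ker_le_comap _)
  have h := (Z.mkQ.comp (W.comap Z.mkQ).subtype).finrank_range_add_finrank_ker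
  rw [LinearMap.range_comp, range_subtype, map_comap_eq_of_surjective Z.mkQ_surjective,
    LinearMap.ker_comp, ker_mkQ, (comapSubtypeEquivOfLe hZ).finrank_eq] at h
  exact h.symm

namespace Projectivization
variable {F V : Type*} [Field F] [AddCommGroup V] [Module F V]

theorem submodule_smul (g : V ≃ₗ[F] V) (p : ℙ F V) :
    (g • p).submodule = p.submodule.map (g : V →ₗ[F] V) := by
  rw [← p.mk_rep, smul_mk, submodule_mk, submodule_mk, map_span, Set.image_singleton]
  rfl

instance finite_of_finiteDimensional [Finite F] [FiniteDimensional F V] : Finite (ℙ F V) :=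
  have : Finite V := Module.finite_of_finite F
  inferInstance

theorem subsingleton_of_finrank_eq_one [FiniteDimensional F V] (h : finrank F V = 1) :
    Subsingleton (ℙ F V) :=
  ⟨fun x y => submodule_injective
    ((eq_top_of_finrank_eq (x.finrank_submodule.trans h.symm)).trans
      (eq_top_of_finrank_eq (y.finrank_submodule.trans h.symm)).symm)⟩

theorem card_submodule_eq {W : Submodule F V} (hW : finrank F W = 1) :
    Nat.card {p : ℙ F V // p.submodule = W} = 1 :=
  Nat.card_eq_one_iff_exists.mpr ⟨⟨mk'' W hW, submodule_mk'' W hW⟩,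
    fun p => Subtype.ext (submodule_injective (p.2.trans (submodule_mk'' W hW).symm))⟩

theorem ncard_setOf_submodule_le [Finite F] (W : Submodule F V) :
    {p : ℙ F V | p.submodule ≤ W}.ncard = ∑ i ∈ range (finrank F W), Nat.card F ^ i := by
  rw [← card_of_finrank F W rfl, ← Nat.card_coe_set_eq]
  refine Nat.card_congr ((Equiv.ofInjective _
    (map_injective W.subtype W.injective_subtype)).trans (Equiv.setCongr ?_)).symm
  ext p
  constructor
  · rintro ⟨p', rfl⟩
    rw [← p'.mk_rep, map_mk, Set.mem_ofPred_eq, submodule_mk, span_singleton_le_iff_mem]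
    exact p'.rep.2
  · intro hp
    have hmem : p.rep ∈ W := hp (p.submodule_eq ▸ mem_span_singleton_self p.rep)
    refine ⟨mk F ⟨p.rep, hmem⟩ fun h => p.rep_nonzero (congrArg Subtype.val h), ?_⟩
    rw [map_mk]
    exact p.mk_rep

end Projectivization

def numCompleteFlags (q m : ℕ) : ℕ :=
  ∏ k ∈ range m, ∑ i ∈ range (k + 1), q ^ i

theorem numCompleteFlags_succ (q m : ℕ) :
    numCompleteFlags q (m + 1) = numCompleteFlags q m * ∑ i ∈ range (m + 1), q ^ i :=
  prod_range_succ _ _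

theorem cA_eq_numCompleteFlags {q : ℕ} (hq : 1 < q) (k : ℕ) :
    cA q k = numCompleteFlags q (k + 1) := by
  have hq' : (q : ℚ) ≠ 1 := by exact_mod_cast hq.ne'
  induction k with
  | zero => simp [cA, numCompleteFlags]
  | succ k ih =>
    rw [cA, prod_Icc_succ_top (by omega), ← cA, ih, numCompleteFlags_succ q (k + 1)]
    push_cast
    rw [geom_sum_eq hq']

theorem cA_sub_one {q : ℕ} (hq : 1 < q) (k : ℕ) : cA q (k - 1) = numCompleteFlags q k := by
  cases k with
  | zero => simp [cA, numCompleteFlags]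
  | succ k => exact cA_eq_numCompleteFlags hq k

variable {F V W : Type*} [Field F] [AddCommGroup V] [Module F V] [AddCommGroup W] [Module F W]
  {m : ℕ}

/-- Subspaces of dimensions `0, 1, …, m`: a complete flag exactly when `finrank F V = m`. -/
def CompleteFlag (F V : Type*) [Field F] [AddCommGroup V] [Module F V] (m : ℕ) : Type _ :=
  {U : Fin (m + 1) → Submodule F V // Monotone U ∧ ∀ k, finrank F (U k) = k}

namespace CompleteFlag

noncomputable def subspace (c : CompleteFlag F V m) (k : ℕ) : Submodule F V :=
  if h : k < m + 1 then c.1 ⟨k, h⟩ else ⊤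

noncomputable def type (c : CompleteFlag F V m) (X : Submodule F V) : ℕ :=
  sInf {k | X ≤ c.subspace k}

theorem subspace_mono (c : CompleteFlag F V m) : Monotone c.subspace := by
  intro a b hab
  unfold subspace
  split_ifs with ha hb hb
  · exact c.2.1 (Fin.mk_le_mk.mpr hab)
  · exact le_top
  · omega
  · exact le_rfl

theorem finrank_subspace (c : CompleteFlag F V m) {k : ℕ} (hk : k ≤ m) :
    finrank F (c.subspace k) = k := by
  rw [subspace, dif_pos (by omega)]
  exact c.2.2 _

theorem type_eq_succ_iff (c : CompleteFlag F V m) (X : Submodule F V) (k : ℕ) :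
    c.type X = k + 1 ↔ X ≤ c.subspace (k + 1) ∧ ¬X ≤ c.subspace k :=
  Nat.sInf_upward_closed_eq_succ_iff (fun _ _ h hX => hX.trans (c.subspace_mono h)) k

def map (e : V ≃ₗ[F] W) (c : CompleteFlag F V m) : CompleteFlag F W m :=
  ⟨fun k => (c.1 k).map (e : V →ₗ[F] W), fun _ _ h => map_mono (c.2.1 h),
    fun k => (e.finrank_map_eq _).trans (c.2.2 k)⟩

theorem subspace_map (e : V ≃ₗ[F] W) (c : CompleteFlag F V m) (k : ℕ) :
    (c.map e).subspace k = (c.subspace k).map (e : V →ₗ[F] W) := by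
  unfold subspace
  split_ifs
  · rfl
  · rw [Submodule.map_top, LinearEquiv.range]

theorem type_map (e : V ≃ₗ[F] W) (c : CompleteFlag F V m) (X : Submodule F V) :
    (c.map e).type (X.map (e : V →ₗ[F] W)) = c.type X := by
  simp only [type, subspace_map, map_le_map_iff_of_injective e.injective]

instance : MulAction (V ≃ₗ[F] V) (CompleteFlag F V m) where
  smul g c := c.map g
  one_smul _ := Subtype.ext (funext fun _ => map_id _)
  mul_smul g h _ := Subtype.ext (funext fun _ => map_comp (h : V →ₗ[F] V) (g : V →ₗ[F] V) _)

theorem smul_def (g : V ≃ₗ[F] V) (c : CompleteFlag F V m) : g • c = c.map g := rfl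

theorem le_subspace_succ {Z : Submodule F V} {c : CompleteFlag F V (m + 1)} (hc : c.1 1 = Z)
    (k : Fin (m + 1)) : Z ≤ c.1 k.succ :=
  hc.ge.trans (c.2.1 (Fin.succ_le_succ_iff.2 k.zero_le))

section Quotient
variable [FiniteDimensional F V] {Z : Submodule F V}

noncomputable def quotientEquiv (hZ : finrank F Z = 1) :
    {c : CompleteFlag F V (m + 1) // c.1 1 = Z} ≃ CompleteFlag F (V ⧸ Z) m where
  toFun c := ⟨fun k => (c.1.1 k.succ).map Z.mkQ,
    fun _ _ h => map_mono (c.1.2.1 (Fin.succ_le_succ_iff.2 h)), fun k => by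
      change finrank F ((c.1.1 k.succ).map Z.mkQ) = k
      have h := finrank_comap_mkQ ((c.1.1 k.succ).map Z.mkQ)
      rw [comap_map_mkQ, sup_eq_right.2 (le_subspace_succ c.2 k), c.1.2.2, hZ,
        Fin.val_succ] at h
      omega⟩
  invFun d := ⟨⟨Fin.cons ⊥ fun k => (d.1 k).comap Z.mkQ,
    Fin.monotone_cons (fun _ _ h => comap_mono (d.2.1 h)) fun _ => bot_le, fun k => by
      induction k using Fin.cases with
      | zero => exact finrank_bot F V
      | succ k => rw [Fin.cons_succ, finrank_comap_mkQ, d.2.2, hZ, Fin.val_succ]⟩, by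
    change (d.1 0).comap Z.mkQ = Z
    rw [finrank_eq_zero.mp (d.2.2 0), comap_bot, ker_mkQ]⟩
  left_inv c := by
    refine Subtype.ext (Subtype.ext (funext fun k => ?_))
    induction k using Fin.cases with
    | zero => exact (finrank_eq_zero.mp (c.1.2.2 0)).symm
    | succ k =>
      change ((c.1.1 k.succ).map Z.mkQ).comap Z.mkQ = c.1.1 k.succ
      rw [comap_map_mkQ, sup_eq_right.2 (le_subspace_succ c.2 k)]
  right_inv d := Subtype.ext (funext fun _ => map_comap_eq_of_surjective Z.mkQ_surjective _)

end Quotient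

section Counting
variable [Finite F] [FiniteDimensional F V]

instance : Finite (CompleteFlag F V m) := by
  have : Finite V := Module.finite_of_finite F
  have : Finite (Submodule F V) := .of_injective _ SetLike.coe_injective
  exact Subtype.finite

theorem card_type_eq_succ (c : CompleteFlag F V m) {k : ℕ} (hk : k < m) :
    Nat.card {p : ℙ F V // c.type p.submodule = k + 1} = Nat.card F ^ k := by
  have hset : {p : ℙ F V | c.type p.submodule = k + 1} =
      {p | p.submodule ≤ c.subspace (k + 1)} \ {p | p.submodule ≤ c.subspace k} := by
    ext p
    exact c.type_eq_succ_iff _ k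
  rw [← Set.coe_ofPred, Nat.card_coe_set_eq, hset,
    Set.ncard_sdiff fun p hp => hp.trans (c.subspace_mono k.le_succ),
    Projectivization.ncard_setOf_submodule_le, Projectivization.ncard_setOf_submodule_le,
    c.finrank_subspace hk, c.finrank_subspace hk.le, sum_range_succ, Nat.add_sub_cancel_left]

theorem card_eq_numCompleteFlags (hV : finrank F V = m) :
    Nat.card (CompleteFlag F V m) = numCompleteFlags (Nat.card F) m := by
  induction m generalizing V with
  | zero =>
    rw [numCompleteFlags, prod_range_zero, Nat.card_eq_one_iff_exists]
    have hk (k : Fin 1) : (k : ℕ) = 0 := by omega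
    refine ⟨⟨fun _ => ⊥, monotone_const, fun k => by rw [finrank_bot, hk]⟩,
      fun c => Subtype.ext (funext fun k => finrank_eq_zero.mp ((c.2.2 k).trans (hk k)))⟩
  | succ m ih =>
    have hfiber (p : ℙ F V) : Nat.card {c : CompleteFlag F V (m + 1) // c.1 1 = p.submodule} =
        numCompleteFlags (Nat.card F) m := by
      have := p.submodule.finrank_quotient_add_finrank
      rw [p.finrank_submodule, hV] at this
      rw [Nat.card_congr (quotientEquiv p.finrank_submodule), ih (by omega)]
    have key := Nat.card_mul_eq_card_mul_of_fibers _ hfiber fun c =>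
      (Nat.card_congr (Equiv.subtypeEquivRight fun _ => eq_comm)).trans
        (Projectivization.card_submodule_eq (c.2.2 1))
    rw [Projectivization.card_of_finrank F V hV, mul_one] at key
    rw [← key, numCompleteFlags_succ, mul_comm]

theorem card_type_eq (hV : finrank F V = m + 1) (X : ℙ F V) {i : ℕ} (hi : i ≤ m) :
    Nat.card {c : CompleteFlag F V (m + 1) // c.type X.submodule = i + 1} =
      numCompleteFlags (Nat.card F) m * Nat.card F ^ i := by
  have := MulAction.isPretransitive_of_is_two_pretransitive (G := V ≃ₗ[F] V) (α := ℙ F V)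
  have key := MulAction.card_mul_card_fiber_of_isPretransitive (G := V ≃ₗ[F] V)
    (fun (p : ℙ F V) (c : CompleteFlag F V (m + 1)) => c.type p.submodule = i + 1)
    (fun g p c => by rw [Projectivization.submodule_smul, smul_def, type_map])
    (fun c => c.card_type_eq_succ (by omega)) X
  rw [Projectivization.card_of_finrank F V hV, card_eq_numCompleteFlags hV,
    numCompleteFlags_succ] at key
  refine Nat.eq_of_mul_eq_mul_left (geom_sum_pos (Nat.zero_le (Nat.card F)) m.succ_ne_zero) ?_
  rw [key]
  ring

theorem card_type_eq_and_type_eq (hV : finrank F V = m + 1) (X : ℙ F V) {i j : ℕ}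
    (hi : i ≤ m) :
    Nat.card {c : CompleteFlag F V (m + 1) //
        c.type X.submodule = i + 1 ∧ c.type X.submodule = j + 1} =
      if i = j then numCompleteFlags (Nat.card F) m * Nat.card F ^ i else 0 := by
  split_ifs with hij
  · subst hij
    simp only [and_self]
    exact card_type_eq hV X hi
  · have : IsEmpty {c : CompleteFlag F V (m + 1) //
        c.type X.submodule = i + 1 ∧ c.type X.submodule = j + 1} :=
      ⟨fun c => hij (by omega)⟩
    exact Nat.card_of_isEmpty

theorem card_type_eq_type_eq (hV : finrank F V = m + 2) {X Y : ℙ F V} (hXY : X ≠ Y) {i j : ℕ}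
    (hi : i ≤ m + 1) (hj : j ≤ m + 1) :
    Nat.card F * Nat.card {c : CompleteFlag F V (m + 2) //
        c.type X.submodule = i + 1 ∧ c.type Y.submodule = j + 1} =
      numCompleteFlags (Nat.card F) m * Nat.card F ^ i *
        (Nat.card F ^ j - if i = j then 1 else 0) := by
  set q := Nat.card F
  have hfiber (c : CompleteFlag F V (m + 2)) : Nat.card {f : Fin 2 ↪ ℙ F V //
      c.type (f 0).submodule = i + 1 ∧ c.type (f 1).submodule = j + 1} =
      q ^ i * (q ^ j - if i = j then 1 else 0) := by
    have hs {k : ℕ} (hk : k ≤ m + 1) :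
        {p : ℙ F V | c.type p.submodule = k + 1}.ncard = q ^ k :=
      (Nat.card_coe_set_eq _).symm.trans (c.card_type_eq_succ (by omega))
    refine (Function.Embedding.card_fin_two_mem {p : ℙ F V | c.type p.submodule = i + 1}
      {p | c.type p.submodule = j + 1}).trans ?_
    rw [hs hi, hs hj]
    split_ifs with hij
    · subst hij
      rw [Set.inter_self, hs hi, Nat.mul_sub_one]
    · have hdisj : {p : ℙ F V | c.type p.submodule = i + 1} ∩
          {p | c.type p.submodule = j + 1} = ∅ :=
        Set.disjoint_iff_inter_eq_empty.mp
          (Set.disjoint_left.mpr fun p hp hp' => hij (by simp_all))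
      rw [hdisj, Set.ncard_empty, Nat.sub_zero, Nat.sub_zero]
  have key := MulAction.card_mul_card_fiber_of_isPretransitive (G := V ≃ₗ[F] V)
    (fun (f : Fin 2 ↪ ℙ F V) (c : CompleteFlag F V (m + 2)) =>
      c.type (f 0).submodule = i + 1 ∧ c.type (f 1).submodule = j + 1)
    (fun g f c => by
      simp only [Function.Embedding.smul_apply, Projectivization.submodule_smul, smul_def,
        type_map])
    hfiber (Function.Embedding.embFinTwo hXY)
  rw [Function.Embedding.card_fin_two, Projectivization.card_of_finrank F V hV,
    card_eq_numCompleteFlags hV, numCompleteFlags_succ, numCompleteFlags_succ,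
    geom_sum_succ (n := m + 1), Nat.add_sub_cancel, Function.Embedding.embFinTwo_apply_zero,
    Function.Embedding.embFinTwo_apply_one] at key
  have hpos : 0 < (q * ∑ k ∈ range (m + 1), q ^ k + 1) * ∑ k ∈ range (m + 1), q ^ k :=
    Nat.mul_pos (Nat.succ_pos _) (geom_sum_pos (Nat.zero_le q) m.succ_ne_zero)
  refine Nat.eq_of_mul_eq_mul_left hpos ?_
  linear_combination key

end Counting

end CompleteFlag

theorem card_maxFlagA_eq {F : Type} [Field F] {n : ℕ} (X Y : Submodule F (Fin (n + 1) → F))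
    (i j : ℕ) :
    Nat.card {c : MaxFlagA F n // flagTypeA c X = i ∧ flagTypeA c Y = j} =
      Nat.card {c : CompleteFlag F (Fin (n + 1) → F) (n + 1) // c.type X = i ∧ c.type Y = j} :=
  rfl

theorem card_inter_type_sets_general (F : Type) [Field F] [Fintype F] (q : ℕ)
    (hq : Fintype.card F = q) (n : ℕ)
    (X Y : Submodule F (Fin (n + 1) → F))
    (hX : Module.finrank F X = 1) (hY : Module.finrank F Y = 1)
    (i j : ℕ) (hi1 : 1 ≤ i) (hi2 : i ≤ n + 1) (hj1 : 1 ≤ j) (hj2 : j ≤ n + 1) :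
    (X = Y →
      (Nat.card {c : MaxFlagA F n // flagTypeA c X = i ∧ flagTypeA c Y = j} : ℚ) =
        (if i = j then 1 else 0) * cA (q : ℚ) (n - 1) * (q : ℚ) ^ (i - 1)) ∧
    (X ≠ Y →
      (q : ℚ) * (Nat.card {c : MaxFlagA F n // flagTypeA c X = i ∧ flagTypeA c Y = j} : ℚ) =
        cA (q : ℚ) (n - 2) * (q : ℚ) ^ (i - 1) *
          ((q : ℚ) ^ (j - 1) - (if i = j then 1 else 0))) := by
  have hcard : Nat.card F = q := Nat.card_eq_fintype_card.trans hq
  have hq1 : 1 < q := hq ▸ Fintype.one_lt_card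
  have hV : finrank F (Fin (n + 1) → F) = n + 1 := finrank_fin_fun F
  obtain ⟨x, rfl⟩ : ∃ x : ℙ F (Fin (n + 1) → F), x.submodule = X :=
    ⟨_, Projectivization.submodule_mk'' X hX⟩
  obtain ⟨y, rfl⟩ : ∃ y : ℙ F (Fin (n + 1) → F), y.submodule = Y :=
    ⟨_, Projectivization.submodule_mk'' Y hY⟩
  obtain ⟨i, rfl⟩ : ∃ i', i = i' + 1 := ⟨i - 1, by omega⟩
  obtain ⟨j, rfl⟩ : ∃ j', j = j' + 1 := ⟨j - 1, by omega⟩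
  simp only [card_maxFlagA_eq, Nat.add_sub_cancel, add_left_inj]
  refine ⟨fun hxy => ?_, fun hxy => ?_⟩
  · obtain rfl := Projectivization.submodule_injective hxy
    rw [CompleteFlag.card_type_eq_and_type_eq hV x (by omega), hcard, cA_sub_one hq1]
    split_ifs <;> push_cast <;> ring
  · have hn : n ≠ 0 := by
      rintro rfl
      have := Projectivization.subsingleton_of_finrank_eq_one hV
      exact hxy (congrArg _ (Subsingleton.elim x y))
    obtain ⟨m, rfl⟩ := Nat.exists_eq_add_one.mpr (Nat.pos_of_ne_zero hn)
    have key := CompleteFlag.card_type_eq_type_eq hV (fun h => hxy (congrArg _ h))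
      (i := i) (j := j) (by omega) (by omega)
    have hδ : (if i = j then 1 else 0) ≤ q ^ j := by
      split_ifs
      exacts [Nat.one_le_pow _ _ (by omega), Nat.zero_le _]
    rw [hcard, ← Nat.cast_inj (R := ℚ)] at key
    push_cast [Nat.cast_sub hδ] at key
    rwa [show m + 1 - 2 = m - 1 by omega, cA_sub_one hq1]

/-- `|C_i^X ∩ C_j^Y|` equals `δ_{ij}·c(n-1)·q^(i-1)` when `X = Y`, and satisfies
`q·|C_i^X ∩ C_j^Y| = c(n-2)·q^(i-1)·(q^(j-1)-δ_{ij})` when `X ≠ Y`. -/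
theorem card_inter_type_sets (F : Type) [Field F] [Fintype F] (q : ℕ)
    (hq : Fintype.card F = q) (n : ℕ) (hn : 2 ≤ n)
    (X Y : Submodule F (Fin (n + 1) → F))
    (hX : Module.finrank F X = 1) (hY : Module.finrank F Y = 1)
    (i j : ℕ) (hi1 : 1 ≤ i) (hi2 : i ≤ n + 1) (hj1 : 1 ≤ j) (hj2 : j ≤ n + 1) :
    (X = Y →
      (Nat.card {c : MaxFlagA F n // flagTypeA c X = i ∧ flagTypeA c Y = j} : ℚ) =
        (if i = j then 1 else 0) * cA (q : ℚ) (n - 1) * (q : ℚ) ^ (i - 1)) ∧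
    (X ≠ Y →
      (q : ℚ) * (Nat.card {c : MaxFlagA F n // flagTypeA c X = i ∧ flagTypeA c Y = j} : ℚ) =
        cA (q : ℚ) (n - 2) * (q : ℚ) ^ (i - 1) *
          ((q : ℚ) ^ (j - 1) - (if i = j then 1 else 0))) :=
  card_inter_type_sets_general F q hq n X Y hX hY i j hi1 hi2 hj1 hj2
end

section
/- Let 𝓒 and 𝓔 be finite index sets, let E be a nonzero complex 𝓔×𝓔 matrix, let T_1,…,T_ℓ and F_1,…,F_m be complex 𝓒×𝓔 matrices, let g : {1,…,m} → {1,…,ℓ} be injective, and let α_1,…,α_m be nonzero complex numbers such that T_{g(j)}ᵀ·F_j = α_j·E for all j ∈ {1,…,m} and T_hᵀ·F_j = 0 whenever h < g(j). Then rank(F_j) ≥ rank(E) for every j ∈ {1,…,m}, and the sum of the column spaces col(F_1) + ⋯ + col(F_m) has dimension at least m·rank(E). -/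
/-!
Order the indices by `g` and peel off the index `j` with the smallest `g j`. The map
`x ↦ T_(g j)ᵀ x` kills the column spaces of all the other `F i`, while it sends `col(F j)`
onto `col(α_j E) = col(E)`; by rank–nullity, adding `col(F j)` to the sum of the others
therefore raises its dimension by at least `rank E`.
-/

open Matrix Finset Module

namespace Submodule

variable {K M N : Type*} [Field K] [AddCommGroup M] [Module K M] [AddCommGroup N] [Module K N]
  [FiniteDimensional K M]

theorem finrank_add_finrank_map_le_finrank_sup (U W : Submodule K M) {L : M →ₗ[K] N}
    (hW : W ≤ LinearMap.ker L) :
    finrank K W + finrank K (U.map L) ≤ finrank K ↥(U ⊔ W) := by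
  set f := L ∘ₗ (U ⊔ W).subtype
  have hrange : U.map L ≤ LinearMap.range f := by
    rw [LinearMap.range_comp, range_subtype]
    exact map_mono le_sup_left
  have hker : finrank K W ≤ finrank K (LinearMap.ker f) := by
    rw [← (comapSubtypeEquivOfLe (le_sup_right : W ≤ U ⊔ W)).finrank_eq]
    exact finrank_mono fun _ hx ↦ hW hx
  have rank_nullity := LinearMap.finrank_range_add_finrank_ker f
  have := finrank_mono hrange
  omega

theorem card_mul_le_finrank_biSup_of_triangular {ι κ : Type*} [LinearOrder κ]
    (U : ι → Submodule K M) (L : ι → M →ₗ[K] N) {g : ι → κ} (hg : g.Injective)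
    (r : ℕ) (hdiag : ∀ j, r ≤ finrank K ((U j).map (L j)))
    (hoff : ∀ i j, g j < g i → U i ≤ LinearMap.ker (L j)) (s : Finset ι) :
    #s * r ≤ finrank K ↥(⨆ j ∈ s, U j) := by
  classical
  induction s using Finset.induction_on_min_value g with
  | empty => simp
  | insert a s has hmin ih =>
    have hker : ⨆ i ∈ s, U i ≤ LinearMap.ker (L a) :=
      iSup₂_le fun i hi ↦ hoff i a <| (hmin i hi).lt_of_ne <|
        hg.ne (ne_of_mem_of_not_mem hi has).symm
    have := finrank_add_finrank_map_le_finrank_sup (U a) _ hker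
    rw [card_insert_of_notMem has, Finset.iSup_insert]
    linarith [hdiag a]

end Submodule

theorem Matrix.range_mulVecLin_mul {l m n R : Type*} [CommSemiring R] [Fintype m] [Fintype n]
    (A : Matrix l m R) (B : Matrix m n R) :
    LinearMap.range (A * B).mulVecLin = (LinearMap.range B.mulVecLin).map A.mulVecLin := by
  rw [mulVecLin_mul, LinearMap.range_comp]

theorem triangular_criterion_general {C E : Type} [Fintype C] [Fintype E] (ℓ m : ℕ)
    (Emat : Matrix E E ℂ)
    (T : Fin ℓ → Matrix C E ℂ) (Fm : Fin m → Matrix C E ℂ)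
    (g : Fin m → Fin ℓ) (hg : Function.Injective g)
    (α : Fin m → ℂ) (hα : ∀ j, α j ≠ 0)
    (h1 : ∀ j : Fin m, (T (g j))ᵀ * Fm j = α j • Emat)
    (h2 : ∀ (j : Fin m) (h : Fin ℓ), h < g j → (T h)ᵀ * Fm j = 0) :
    (∀ j : Fin m, Emat.rank ≤ (Fm j).rank) ∧
    (m * Emat.rank ≤
      Module.finrank ℂ ↥(⨆ j : Fin m, LinearMap.range (Fm j).mulVecLin)) := by
  have hrank : ∀ j, ((T (g j))ᵀ * Fm j).rank = Emat.rank := fun j ↦ by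
    rw [h1, rank_smul_of_mem_nonZeroDivisors _ (mem_nonZeroDivisors_of_ne_zero (hα j))]
  refine ⟨fun j ↦ hrank j ▸ rank_mul_le_right _ _, ?_⟩
  have := Submodule.card_mul_le_finrank_biSup_of_triangular
    (fun j ↦ LinearMap.range (Fm j).mulVecLin) (fun j ↦ (T (g j))ᵀ.mulVecLin) hg Emat.rank
    (fun j ↦ by rw [← range_mulVecLin_mul, ← rank, hrank])
    (fun i j hji ↦ LinearMap.range_le_ker_iff.mpr <| by rw [← mulVecLin_mul, h2 i (g j) hji,
      mulVecLin_zero])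
    univ
  rwa [card_univ, Fintype.card_fin, show (⨆ j ∈ univ, LinearMap.range (Fm j).mulVecLin) =
    ⨆ j, LinearMap.range (Fm j).mulVecLin by simp] at this

/-- The triangular criterion: if `T_(g j)ᵀ · F j = α j • E` with `α j ≠ 0`, and
`T hᵀ · F j = 0` whenever `h < g j`, with `g` injective, then each `F j` has rank at
least `rank E` and the sum of the column spaces of the `F j` has dimension at least
`m · rank E`. -/
theorem triangular_criterion {C E : Type} [Fintype C] [Fintype E] (ℓ m : ℕ)
    (Emat : Matrix E E ℂ) (hE : Emat ≠ 0)
    (T : Fin ℓ → Matrix C E ℂ) (Fm : Fin m → Matrix C E ℂ)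
    (g : Fin m → Fin ℓ) (hg : Function.Injective g)
    (α : Fin m → ℂ) (hα : ∀ j, α j ≠ 0)
    (h1 : ∀ j : Fin m, (T (g j))ᵀ * Fm j = α j • Emat)
    (h2 : ∀ (j : Fin m) (h : Fin ℓ), h < g j → (T h)ᵀ * Fm j = 0) :
    (∀ j : Fin m, Emat.rank ≤ (Fm j).rank) ∧
    (m * Emat.rank ≤
      Module.finrank ℂ ↥(⨆ j : Fin m, LinearMap.range (Fm j).mulVecLin)) :=
  triangular_criterion_general ℓ m Emat T Fm g hg α hα h1 h2
end
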